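/- arXiv:quant-ph/0211050 — 8 statements merged into one kernel-verified Lean document; each statement's English description precedes it below -/
import Mathlib

section
/- Let Q be an invertible 2×2 complex matrix, A = Q ⊗ₖ Q, and H = Aᴴ·A. If Hᵢⱼ = 0 for some pair of indices i ≠ j, then Hᵢⱼ = 0 for all pairs i ≠ j, i.e. H is a diagonal matrix. -/
open Matrix Kronecker

theorem AHA_offdiag_zero_implies_diag (Q : Matrix (Fin 2) (Fin 2) ℂ) (hQ : IsUnit Q.det)
    (h : ∃ i j : Fin 2 × Fin 2, i ≠ j ∧ ((Q ⊗ₖ Q)ᴴ * (Q ⊗ₖ Q)) i j = 0) :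
    ((Q ⊗ₖ Q)ᴴ * (Q ⊗ₖ Q)).IsDiag := by
  set G := Qᴴ * Q with hGdef
  have hct : (Q ⊗ₖ Q)ᴴ = Qᴴ ⊗ₖ Qᴴ := by
    ext i j
    simp [conjTranspose_apply, kroneckerMap_apply, mul_comm]
  have hH : (Q ⊗ₖ Q)ᴴ * (Q ⊗ₖ Q) = G ⊗ₖ G := by
    rw [hct, Matrix.mul_kronecker_mul]
  have hGapp : ∀ p q : Fin 2, G p q = ∑ k : Fin 2, star (Q k p) * Q k q := by
    intro p q
    simp [hGdef, Matrix.mul_apply, conjTranspose_apply]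
  have hdiag : ∀ p : Fin 2, G p p ≠ 0 := by
    intro p hp
    have h0 : ∀ k : Fin 2, Q k p = 0 := by
      rw [hGapp] at hp
      have h1 : (∑ k : Fin 2, (Complex.normSq (Q k p) : ℂ)) = 0 := by
        rw [← hp]
        congr 1; ext k
        rw [Complex.normSq_eq_conj_mul_self]; rfl
      have hre : (∑ k : Fin 2, Complex.normSq (Q k p)) = 0 := by
        exact_mod_cast h1
      intro k
      have := (Finset.sum_eq_zero_iff_of_nonneg
        (fun k _ => Complex.normSq_nonneg (Q k p))).mp hre k (Finset.mem_univ k)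
      exact Complex.normSq_eq_zero.mp this
    exact hQ.ne_zero (Matrix.det_eq_zero_of_column_eq_zero p h0)
  have hherm : G 1 0 = star (G 0 1) := by
    have hh : G.IsHermitian := Matrix.isHermitian_conjTranspose_mul_self Q
    rw [← hh.apply 1 0]
  have key : ∀ p q : Fin 2, p ≠ q → G p q = 0 → G 0 1 = 0 := by
    intro p q hpq h1
    fin_cases p <;> fin_cases q <;>
      first
        | exact absurd rfl hpq
        | exact h1
        | exact star_eq_zero.mp (hherm.symm.trans h1)
  obtain ⟨i, j, hij, hz⟩ := h
  rw [hH, kroneckerMap_apply] at hz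
  have hb : G 0 1 = 0 := by
    rcases mul_eq_zero.mp hz with h1 | h1
    · by_cases hc : i.1 = j.1
      · exact absurd (hc ▸ h1) (hdiag j.1)
      · exact key _ _ hc h1
    · by_cases hc : i.2 = j.2
      · exact absurd (hc ▸ h1) (hdiag j.2)
      · exact key _ _ hc h1
  have hoff : ∀ p q : Fin 2, p ≠ q → G p q = 0 := by
    intro p q hpq
    fin_cases p <;> fin_cases q <;>
      first
        | exact absurd rfl hpq
        | exact hb
        | exact hherm.trans (by rw [hb]; exact star_zero ℂ)
  rw [hH]
  intro a b hab
  rw [kroneckerMap_apply]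
  by_cases hc : a.1 = b.1
  · have h2 : a.2 ≠ b.2 := fun h2 => hab (Prod.ext hc h2)
    rw [hoff _ _ h2, mul_zero]
  · rw [hoff _ _ hc, zero_mul]
end

section
/- (Family 1) Let p, q, r ∈ ℂ with |p| = |q| = |r| = 1, let R = diag(1, p, q, r) (a 4×4 diagonal matrix), let Q = [[a,b],[c,d]] be an invertible 2×2 complex matrix with a·conj(b) + c·conj(d) = 0, let A = Q ⊗ₖ Q, and let k ∈ ℂ with |k| = 1. Then the matrix k·A·R·A⁻¹·T is unitary and satisfies the braided Yang–Baxter equation. -/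
open Matrix Kronecker

/-- Identify `Fin 2 × Fin 2` with `Fin 4` using the basis ordering
`v₀⊗v₀, v₀⊗v₁, v₁⊗v₀, v₁⊗v₁`. -/
def toFin4 : Fin 2 × Fin 2 → Fin 4 := fun p => ⟨2 * p.1.val + p.2.val, by omega⟩

/-- View an explicit `4 × 4` matrix as a matrix acting on `ℂ² ⊗ ℂ²`. -/
def m44 (M : Matrix (Fin 4) (Fin 4) ℂ) : Matrix (Fin 2 × Fin 2) (Fin 2 × Fin 2) ℂ :=
  M.submatrix toFin4 toFin4

/-- The swap matrix `T`, with `T (vᵢ ⊗ vⱼ) = vⱼ ⊗ vᵢ`. -/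
def swapT : Matrix (Fin 2 × Fin 2) (Fin 2 × Fin 2) ℂ :=
  m44 !![1, 0, 0, 0; 0, 0, 1, 0; 0, 1, 0, 0; 0, 0, 0, 1]

/-- The braided Yang–Baxter equation for a matrix acting on `ℂ² ⊗ ℂ²`. -/
def braidedYB (R : Matrix (Fin 2 × Fin 2) (Fin 2 × Fin 2) ℂ) : Prop :=
  let R12 := Matrix.reindex (Equiv.prodAssoc (Fin 2) (Fin 2) (Fin 2))
      (Equiv.prodAssoc (Fin 2) (Fin 2) (Fin 2)) (R ⊗ₖ (1 : Matrix (Fin 2) (Fin 2) ℂ))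
  let R23 := (1 : Matrix (Fin 2) (Fin 2) ℂ) ⊗ₖ R
  R12 * R23 * R12 = R23 * R12 * R23

/-! The matrix is `k • A (R T) A⁻¹`, because the swap `T` commutes with `A⁻¹ = Q⁻¹ ⊗ Q⁻¹`.
`R T` sends `vᵢ ⊗ vⱼ` to a multiple `c(j,i) vⱼ ⊗ vᵢ`, and both sides of the braided Yang–Baxter
equation send `vᵢ ⊗ vⱼ ⊗ vₗ` to `c(j,i) c(l,i) c(l,j) vₗ ⊗ vⱼ ⊗ vᵢ`; the equation survives
conjugation by `Q ⊗ Q` and scaling. For unitarity, orthogonality of the columns of `Q` makes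
`Aᴴ A = QᴴQ ⊗ QᴴQ` diagonal, so it commutes with the diagonal unitary `R`, and then
`(A R A⁻¹)ᴴ (A R A⁻¹) = A⁻ᴴ Aᴴ A A⁻¹ = 1`. -/

open Equiv

section Unitary

variable {n α : Type*} [Fintype n] [DecidableEq n] [CommRing α] [StarRing α]

lemma permMatrix_mem_unitaryGroup (σ : Perm n) : σ.permMatrix α ∈ unitaryGroup n α := by
  rw [mem_unitaryGroup_iff', star_eq_conjTranspose, conjTranspose_permMatrix, ← permMatrix_mul,
    mul_inv_cancel, permMatrix_one]

lemma diagonal_mem_unitaryGroup {v : n → α} (hv : ∀ i, v i ∈ unitary α) :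
    diagonal v ∈ unitaryGroup n α := by
  rw [mem_unitaryGroup_iff', star_eq_conjTranspose, diagonal_conjTranspose, diagonal_mul_diagonal,
    ← diagonal_one]
  exact congrArg diagonal (funext fun i => Unitary.star_mul_self_of_mem (hv i))

lemma mul_mul_inv_mem_unitaryGroup {A R : Matrix n n α} (hA : IsUnit A.det)
    (hR : R ∈ unitaryGroup n α) (hRA : Commute R (Aᴴ * A)) : A * R * A⁻¹ ∈ unitaryGroup n α := by
  rw [mem_unitaryGroup_iff'] at hR ⊢
  have hAH : IsUnit Aᴴ.det := by rwa [det_conjTranspose, isUnit_star]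
  calc star (A * R * A⁻¹) * (A * R * A⁻¹) = Aᴴ⁻¹ * (star R * (R * (Aᴴ * A))) * A⁻¹ := by
        simp only [star_eq_conjTranspose, conjTranspose_mul, conjTranspose_nonsing_inv, hRA.eq,
          Matrix.mul_assoc]
    _ = 1 := by
        rw [← Matrix.mul_assoc (star R), hR, Matrix.one_mul, ← Matrix.mul_assoc,
          nonsing_inv_mul _ hAH, Matrix.one_mul, mul_nonsing_inv _ hA]

lemma isDiag_conjTranspose_mul_self_of_orthogonal {a b c d : α}
    (h : a * star b + c * star d = 0) : (!![a, b; c, d]ᴴ * !![a, b; c, d]).IsDiag := by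
  have h₀₁ : star a * b + star c * d = 0 := by
    simpa only [star_add, star_mul', star_star, star_zero] using congrArg star h
  have h₁₀ : star b * a + star d * c = 0 := by linear_combination h
  intro i j hij
  fin_cases i <;> fin_cases j
  all_goals simp_all [mul_apply, Fin.sum_univ_two]

end Unitary

lemma Matrix.IsDiag.commute {n α : Type*} [Fintype n] [DecidableEq n] [CommSemiring α]
    {A B : Matrix n n α} (hA : A.IsDiag) (hB : B.IsDiag) : Commute A B := by
  rw [← hA.diagonal_diag, ← hB.diagonal_diag]
  exact commute_diagonal _ _

lemma mem_unitary_of_norm_eq_one {z : ℂ} (hz : ‖z‖ = 1) : z ∈ unitary ℂ := by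
  rw [Unitary.mem_iff_star_mul_self, RCLike.star_def, Complex.conj_mul', hz]
  norm_num

lemma permMatrix_prodComm_mul_kronecker {n α : Type*} [Fintype n] [DecidableEq n] [CommRing α]
    (X Y : Matrix n n α) :
    Perm.permMatrix α (prodComm n n) * (X ⊗ₖ Y) = (Y ⊗ₖ X) * Perm.permMatrix α (prodComm n n) := by
  rw [PEquiv.toMatrix_toPEquiv_mul, PEquiv.mul_toMatrix_toPEquiv]
  ext ⟨i, j⟩ ⟨k, l⟩
  simp [mul_comm]

lemma toFin4_injective : Function.Injective toFin4 := by
  rintro ⟨a, b⟩ ⟨c, d⟩ h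
  simp only [toFin4, Fin.mk.injEq] at h
  simp only [Prod.mk.injEq, Fin.ext_iff]
  omega

lemma m44_diagonal (v : Fin 4 → ℂ) : m44 (diagonal v) = diagonal (v ∘ toFin4) :=
  submatrix_diagonal v toFin4 toFin4_injective

lemma diagonal_fin_four {α : Type*} [Zero α] (w x y z : α) :
    diagonal ![w, x, y, z] = !![w, 0, 0, 0; 0, x, 0, 0; 0, 0, y, 0; 0, 0, 0, z] := by
  ext i j
  fin_cases i <;> fin_cases j <;> rfl

lemma swapT_eq_permMatrix : swapT = Perm.permMatrix ℂ (prodComm (Fin 2) (Fin 2)) := by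
  ext ⟨i, j⟩ ⟨k, l⟩
  fin_cases i <;> fin_cases j <;> fin_cases k <;> fin_cases l <;> simp [swapT, m44, toFin4]

section YangBaxter

def leg12 (R : Matrix (Fin 2 × Fin 2) (Fin 2 × Fin 2) ℂ) :
    Matrix (Fin 2 × Fin 2 × Fin 2) (Fin 2 × Fin 2 × Fin 2) ℂ :=
  reindex (prodAssoc (Fin 2) (Fin 2) (Fin 2)) (prodAssoc (Fin 2) (Fin 2) (Fin 2))
    (R ⊗ₖ (1 : Matrix (Fin 2) (Fin 2) ℂ))

def leg23 (R : Matrix (Fin 2 × Fin 2) (Fin 2 × Fin 2) ℂ) :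
    Matrix (Fin 2 × Fin 2 × Fin 2) (Fin 2 × Fin 2 × Fin 2) ℂ :=
  (1 : Matrix (Fin 2) (Fin 2) ℂ) ⊗ₖ R

variable {R : Matrix (Fin 2 × Fin 2) (Fin 2 × Fin 2) ℂ}

lemma braidedYB_iff : braidedYB R ↔ leg12 R * leg23 R * leg12 R = leg23 R * leg12 R * leg23 R :=
  Iff.rfl

lemma leg12_smul (k : ℂ) : leg12 (k • R) = k • leg12 R := by
  rw [leg12, smul_kronecker, reindex_apply, submatrix_smul]
  rfl

lemma leg23_smul (k : ℂ) : leg23 (k • R) = k • leg23 R :=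
  kronecker_smul k _ _

lemma leg12_conj {S : Matrix (Fin 2) (Fin 2) ℂ} (hS : IsUnit S.det) :
    leg12 ((S ⊗ₖ S) * R * (S ⊗ₖ S)⁻¹) = (S ⊗ₖ (S ⊗ₖ S)) * leg12 R * (S⁻¹ ⊗ₖ (S⁻¹ ⊗ₖ S⁻¹)) := by
  have h : ((S ⊗ₖ S) * R * (S ⊗ₖ S)⁻¹) ⊗ₖ (1 : Matrix (Fin 2) (Fin 2) ℂ)
      = (S ⊗ₖ S ⊗ₖ S) * (R ⊗ₖ 1) * (S⁻¹ ⊗ₖ S⁻¹ ⊗ₖ S⁻¹) := by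
    rw [← mul_kronecker_mul, ← mul_kronecker_mul, Matrix.mul_one, mul_nonsing_inv _ hS,
      inv_kronecker]
  rw [leg12, h, ← coe_reindexAlgEquiv ℂ ℂ, map_mul, map_mul, coe_reindexAlgEquiv,
    kronecker_assoc, kronecker_assoc]
  rfl

lemma leg23_conj {S : Matrix (Fin 2) (Fin 2) ℂ} (hS : IsUnit S.det) :
    leg23 ((S ⊗ₖ S) * R * (S ⊗ₖ S)⁻¹) = (S ⊗ₖ (S ⊗ₖ S)) * leg23 R * (S⁻¹ ⊗ₖ (S⁻¹ ⊗ₖ S⁻¹)) := by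
  rw [leg23, leg23, ← mul_kronecker_mul, ← mul_kronecker_mul, Matrix.mul_one,
    mul_nonsing_inv _ hS, inv_kronecker]

lemma braidedYB.smul (hR : braidedYB R) (k : ℂ) : braidedYB (k • R) := by
  rw [braidedYB_iff] at hR ⊢
  simp only [leg12_smul, leg23_smul, Matrix.smul_mul, Matrix.mul_smul, hR]

lemma braidedYB.conj (hR : braidedYB R) {S : Matrix (Fin 2) (Fin 2) ℂ} (hS : IsUnit S.det) :
    braidedYB ((S ⊗ₖ S) * R * (S ⊗ₖ S)⁻¹) := by
  rw [braidedYB_iff] at hR ⊢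
  rw [leg12_conj hS, leg23_conj hS]
  set G := S ⊗ₖ (S ⊗ₖ S)
  set G' := S⁻¹ ⊗ₖ (S⁻¹ ⊗ₖ S⁻¹)
  have cancel : ∀ X, G' * (G * X) = X := fun X => by
    rw [← Matrix.mul_assoc, ← mul_kronecker_mul, ← mul_kronecker_mul, nonsing_inv_mul _ hS,
      one_kronecker_one, one_kronecker_one, Matrix.one_mul]
  calc _ = G * (leg12 R * leg23 R * leg12 R) * G' := by simp only [Matrix.mul_assoc, cancel]
    _ = G * (leg23 R * leg12 R * leg23 R) * G' := by rw [hR]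
    _ = _ := by simp only [Matrix.mul_assoc, cancel]

variable (c : Fin 2 × Fin 2 → ℂ) (i j l : Fin 2)

lemma leg12_diagonal_mul_swapT_mulVec_single :
    leg12 (diagonal c * swapT) *ᵥ Pi.single (i, j, l) 1 = c (j, i) • Pi.single (j, i, l) 1 := by
  ext ⟨a, b, d⟩
  by_cases hb : b = i <;> by_cases ha : a = j <;> by_cases hd : d = l <;>
    simp [leg12, swapT_eq_permMatrix, one_apply, ha, hb, hd]

lemma leg23_diagonal_mul_swapT_mulVec_single :
    leg23 (diagonal c * swapT) *ᵥ Pi.single (i, j, l) 1 = c (l, j) • Pi.single (i, l, j) 1 := by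
  ext ⟨a, b, d⟩
  by_cases ha : a = i <;> by_cases hb : b = l <;> by_cases hd : d = j <;>
    simp [leg23, swapT_eq_permMatrix, one_apply, ha, hb, hd]

lemma braidedYB_diagonal_mul_swapT : braidedYB (diagonal c * swapT) := by
  rw [braidedYB_iff]
  refine ext_of_mulVec_single fun ⟨i, j, l⟩ => ?_
  simp only [← mulVec_mulVec, leg12_diagonal_mul_swapT_mulVec_single,
    leg23_diagonal_mul_swapT_mulVec_single, mulVec_smul, smul_smul]
  ring_nf

end YangBaxter

theorem family1_unitary_solution (p q r k a b c d : ℂ)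
    (hp : ‖p‖ = 1) (hq : ‖q‖ = 1) (hr : ‖r‖ = 1)
    (hk : ‖k‖ = 1)
    (hdet : IsUnit (!![a, b; c, d] : Matrix (Fin 2) (Fin 2) ℂ).det)
    (hc : a * (starRingEnd ℂ) b + c * (starRingEnd ℂ) d = 0) :
    let Q : Matrix (Fin 2) (Fin 2) ℂ := !![a, b; c, d]
    let A := Q ⊗ₖ Q
    let R := m44 !![1, 0, 0, 0; 0, p, 0, 0; 0, 0, q, 0; 0, 0, 0, r]
    let M := k • (A * R * A⁻¹ * swapT)
    Mᴴ * M = 1 ∧ braidedYB M := by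
  intro Q A R M
  set D : Fin 2 × Fin 2 → ℂ := ![1, p, q, r] ∘ toFin4
  have hR : R = diagonal D := by rw [← m44_diagonal, diagonal_fin_four]
  have hA : IsUnit A.det := by
    rw [det_kronecker]
    exact (hdet.pow _).mul (hdet.pow _)
  have hAR : Commute R (Aᴴ * A) := by
    rw [hR, conjTranspose_kronecker, ← mul_kronecker_mul]
    refine (isDiag_diagonal D).commute (IsDiag.kronecker ?_ ?_) <;>
      exact isDiag_conjTranspose_mul_self_of_orthogonal hc
  have hRu : R ∈ unitaryGroup _ ℂ := by
    rw [hR]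
    refine diagonal_mem_unitaryGroup fun ⟨i, j⟩ => ?_
    fin_cases i <;> fin_cases j <;>
      simp [D, toFin4, mem_unitary_of_norm_eq_one, hp, hq, hr]
  constructor
  · refine mem_unitaryGroup_iff'.mp (Unitary.smul_mem_of_mem (mem_unitary_of_norm_eq_one hk) ?_)
    refine mul_mem (mul_mul_inv_mem_unitaryGroup hA hRu hAR) ?_
    rw [swapT_eq_permMatrix]
    exact permMatrix_mem_unitaryGroup _
  · have hswap : A⁻¹ * swapT = swapT * A⁻¹ := by
      rw [inv_kronecker, swapT_eq_permMatrix, permMatrix_prodComm_mul_kronecker]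
    have hM : M = k • (A * (diagonal D * swapT) * A⁻¹) := by
      simp only [M, Matrix.mul_assoc, hswap, hR]
    rw [hM]
    exact ((braidedYB_diagonal_mul_swapT D).conj hdet).smul k
end

section
/- (Family 2) Let Q = [[a,b],[c,d]] be an invertible 2×2 complex matrix with a·conj(b) + c·conj(d) ≠ 0 and conj(a)·b + conj(c)·d ≠ 0, and set p = ((b·conj(b) + d·conj(d))·(conj(a)·b + conj(c)·d)) / ((a·conj(a) + c·conj(c))·(a·conj(b) + c·conj(d))) and q = ((a·conj(a) + c·conj(c))·(a·conj(b) + c·conj(d))) / ((b·conj(b) + d·conj(d))·(conj(a)·b + conj(c)·d)). Let R be the 4×4 matrix with rows [0,0,0,p], [0,0,1,0], [0,1,0,0], [q,0,0,0], let A = Q ⊗ₖ Q, and let k ∈ ℂ with |k| = 1. Then k·A·R·A⁻¹·T is unitary and satisfies the braided Yang–Baxter equation. -/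
open Matrix Kronecker

open Complex ComplexConjugate

/-!
Since `q = 1/p`, writing `p = s²` and `W = !![0, s; s⁻¹, 0]` gives `R = W ⊗ W`, hence
`M = k • ((V ⊗ V) * T)` with `V = Q W Q⁻¹`. Every matrix `(V ⊗ V) * T` solves the braided
Yang–Baxter equation: both sides have entries `(V²)_{ik'} (V²)_{jj'} (V²)_{ki'}`, i.e. they equal
`V² ⊗ V² ⊗ V²` composed with the reversal of the three tensor factors. `M` is unitary as soon as
`V` is, that is, as soon as `W` preserves the Gram form `Qᴴ Q = !![α, γ; conj γ, δ]`, where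
`α = |a|² + |c|²`, `δ = |b|² + |d|²`, `γ = conj a * b + conj c * d`. This fixes `|s|² = δ / α`
and the phase of `s` to be that of `γ`, which is exactly `s² = p`.
-/

lemma swapT_eq_permMatrix_s11 : swapT = Equiv.Perm.permMatrix ℂ (Equiv.prodComm (Fin 2) (Fin 2)) := by
  ext ⟨i, j⟩ ⟨k, l⟩
  fin_cases i <;> fin_cases j <;> fin_cases k <;> fin_cases l <;> rfl

lemma kronecker_self_mul_swapT_apply (V : Matrix (Fin 2) (Fin 2) ℂ) (i j k l : Fin 2) :
    ((V ⊗ₖ V) * swapT) (i, j) (k, l) = V i l * V j k := by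
  rw [swapT_eq_permMatrix_s11, PEquiv.mul_toMatrix_toPEquiv]
  rfl

lemma braidedYB_kronecker_self_mul_swapT (V : Matrix (Fin 2) (Fin 2) ℂ) :
    braidedYB ((V ⊗ₖ V) * swapT) := by
  have h := kronecker_self_mul_swapT_apply V
  generalize (V ⊗ₖ V) * swapT = X at h ⊢
  unfold braidedYB
  ext ⟨i, j, k⟩ ⟨i', j', k'⟩
  simp only [reindex_apply, submatrix_apply, Equiv.prodAssoc_symm_apply, kroneckerMap_apply,
    Matrix.mul_apply, h, Matrix.one_apply, mul_ite, ite_mul, mul_one, one_mul, mul_zero, zero_mul,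
    Fintype.sum_prod_type, Finset.sum_ite_irrel, Finset.sum_ite_eq, Finset.sum_ite_eq',
    Finset.mem_univ, if_true, Finset.sum_const_zero, Fin.sum_univ_two]
  ring

lemma braidedYB_smul (k : ℂ) {R : Matrix (Fin 2 × Fin 2) (Fin 2 × Fin 2) ℂ} (hR : braidedYB R) :
    braidedYB (k • R) := by
  have h12 : ∀ e : (Fin 2 × Fin 2) × Fin 2 ≃ Fin 2 × Fin 2 × Fin 2,
      reindex e e ((k • R) ⊗ₖ (1 : Matrix (Fin 2) (Fin 2) ℂ)) = k • reindex e e (R ⊗ₖ 1) := by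
    intro e
    rw [smul_kronecker]
    rfl
  unfold braidedYB at hR ⊢
  simp only [h12, kronecker_smul, smul_mul_smul_comm, hR]

lemma swapT_mem_unitaryGroup : swapT ∈ unitaryGroup (Fin 2 × Fin 2) ℂ := by
  rw [mem_unitaryGroup_iff', star_eq_conjTranspose, swapT_eq_permMatrix_s11, conjTranspose_permMatrix,
    ← permMatrix_mul, mul_inv_cancel, permMatrix_one]

lemma mul_mul_nonsing_inv_mem_unitaryGroup {n α : Type*} [Fintype n] [DecidableEq n] [CommRing α]
    [StarRing α] {Q W : Matrix n n α} (hQ : IsUnit Q.det) (hW : Wᴴ * (Qᴴ * Q) * W = Qᴴ * Q) :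
    Q * W * Q⁻¹ ∈ unitaryGroup n α := by
  rw [mem_unitaryGroup_iff', star_eq_conjTranspose]
  calc (Q * W * Q⁻¹)ᴴ * (Q * W * Q⁻¹) = Q⁻¹ᴴ * (Wᴴ * (Qᴴ * Q) * W) * Q⁻¹ := by
        simp only [conjTranspose_mul, Matrix.mul_assoc]
    _ = (Q * Q⁻¹)ᴴ * (Q * Q⁻¹) := by simp only [hW, conjTranspose_mul, Matrix.mul_assoc]
    _ = 1 := by rw [mul_nonsing_inv Q hQ, conjTranspose_one, Matrix.one_mul]

lemma conjTranspose_mul_self_fin_two (a b c d : ℂ) :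
    (!![a, b; c, d])ᴴ * !![a, b; c, d] =
      !![((normSq a + normSq c : ℝ) : ℂ), conj a * b + conj c * d;
        conj (conj a * b + conj c * d), ((normSq b + normSq d : ℝ) : ℂ)] := by
  ext i j
  fin_cases i <;> fin_cases j <;>
    simp [Matrix.mul_apply, normSq_eq_conj_mul_self, mul_comm]

noncomputable def antidiagInv (s : ℂ) : Matrix (Fin 2) (Fin 2) ℂ := !![0, s; s⁻¹, 0]

lemma antidiagInv_kronecker_self {s : ℂ} (hs : s ≠ 0) :
    antidiagInv s ⊗ₖ antidiagInv s =
      m44 !![0, 0, 0, s ^ 2; 0, 0, 1, 0; 0, 1, 0, 0; (s ^ 2)⁻¹, 0, 0, 0] := by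
  ext ⟨i, j⟩ ⟨k, l⟩
  fin_cases i <;> fin_cases j <;> fin_cases k <;> fin_cases l <;>
    simp [antidiagInv, m44, toFin4, hs, sq]

lemma conjTranspose_antidiagInv_mul_mul_antidiagInv {α δ : ℝ} {γ s : ℂ} (hs : s ≠ 0)
    (hnorm : α * normSq s = δ) (hphase : s * conj γ = conj s * γ) :
    (antidiagInv s)ᴴ * !![(α : ℂ), γ; conj γ, δ] * antidiagInv s = !![(α : ℂ), γ; conj γ, δ] := by
  have hs' : conj s ≠ 0 := (map_ne_zero _).mpr hs
  subst hnorm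
  ext i j
  fin_cases i <;> fin_cases j <;>
    simp only [antidiagInv, Matrix.mul_apply, conjTranspose_apply, Fin.sum_univ_two, of_apply,
      Fin.zero_eta, Fin.mk_one, cons_val', cons_val_zero, cons_val_one, cons_val_fin_one,
      RCLike.star_def, map_zero, map_inv₀, zero_mul, mul_zero, zero_add, add_zero, ofReal_mul,
      normSq_eq_conj_mul_self] <;>
    field_simp
  · linear_combination hphase
  · linear_combination -hphase

lemma exists_antidiagInv_isometry {α δ : ℝ} {γ : ℂ} (hα : 0 < α) (hδ : 0 < δ) (hγ : γ ≠ 0) :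
    ∃ s : ℂ, s ≠ 0 ∧ s ^ 2 = δ * γ / (α * conj γ) ∧
      (antidiagInv s)ᴴ * !![(α : ℂ), γ; conj γ, δ] * antidiagInv s =
        !![(α : ℂ), γ; conj γ, δ] := by
  set r : ℝ := √(δ / α) / ‖γ‖
  have hr : 0 < r := by positivity
  have hr2 : r ^ 2 * ‖γ‖ ^ 2 = δ / α := by
    rw [div_pow, Real.sq_sqrt (by positivity), div_mul_cancel₀ _ (by positivity)]
  have hs : (r : ℂ) * γ ≠ 0 := mul_ne_zero (by exact_mod_cast hr.ne') hγ
  refine ⟨r * γ, hs, ?_, ?_⟩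
  · have hδα : (δ : ℂ) / α = r ^ 2 * (γ * conj γ) := by
      rw [mul_conj, normSq_eq_norm_sq]
      exact_mod_cast hr2.symm
    have hγ' : conj γ ≠ 0 := (map_ne_zero _).mpr hγ
    rw [mul_div_mul_comm, hδα]
    field_simp
  · refine conjTranspose_antidiagInv_mul_mul_antidiagInv hs ?_ ?_
    · rw [normSq_mul, normSq_ofReal, normSq_eq_norm_sq, ← sq, hr2]
      field_simp
    · simp only [map_mul, conj_ofReal]
      ring

lemma normSq_add_normSq_pos {x y : ℂ} (h : x ≠ 0 ∨ y ≠ 0) : 0 < normSq x + normSq y := by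
  rcases h with h | h
  · exact add_pos_of_pos_of_nonneg (normSq_pos.mpr h) (normSq_nonneg y)
  · exact add_pos_of_nonneg_of_pos (normSq_nonneg x) (normSq_pos.mpr h)

theorem family2_unitary_solution_general (k a b c d : ℂ)
    (hk : ‖k‖ = 1)
    (hdet : IsUnit (!![a, b; c, d] : Matrix (Fin 2) (Fin 2) ℂ).det)
    (hc2 : (starRingEnd ℂ) a * b + (starRingEnd ℂ) c * d ≠ 0)
    (p q : ℂ)
    (hp : p = ((b * (starRingEnd ℂ) b + d * (starRingEnd ℂ) d) *
        ((starRingEnd ℂ) a * b + (starRingEnd ℂ) c * d)) /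
        ((a * (starRingEnd ℂ) a + c * (starRingEnd ℂ) c) *
        (a * (starRingEnd ℂ) b + c * (starRingEnd ℂ) d)))
    (hq : q = ((a * (starRingEnd ℂ) a + c * (starRingEnd ℂ) c) *
        (a * (starRingEnd ℂ) b + c * (starRingEnd ℂ) d)) /
        ((b * (starRingEnd ℂ) b + d * (starRingEnd ℂ) d) *
        ((starRingEnd ℂ) a * b + (starRingEnd ℂ) c * d))) :
    let Q : Matrix (Fin 2) (Fin 2) ℂ := !![a, b; c, d]
    let A := Q ⊗ₖ Q
    let R := m44 !![0, 0, 0, p; 0, 0, 1, 0; 0, 1, 0, 0; q, 0, 0, 0]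
    let M := k • (A * R * A⁻¹ * swapT)
    Mᴴ * M = 1 ∧ braidedYB M := by
  intro Q A R M
  have hdet' : a * d - b * c ≠ 0 := by simpa [det_fin_two_of] using hdet
  have hα := normSq_add_normSq_pos (x := a) (y := c) (by contrapose! hdet'; simp [hdet'])
  have hδ := normSq_add_normSq_pos (x := b) (y := d) (by contrapose! hdet'; simp [hdet'])
  obtain ⟨s, hs, hsq, hW⟩ := exists_antidiagInv_isometry hα hδ hc2
  have hps : p = s ^ 2 := by
    rw [hp, hsq]
    simp [mul_conj]
  have hR : R = antidiagInv s ⊗ₖ antidiagInv s := by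
    have hqp : q = p⁻¹ := by rw [hq, hp, inv_div]
    rw [antidiagInv_kronecker_self hs, ← hps, ← hqp]
  set V := Q * antidiagInv s * Q⁻¹
  have hM : M = k • ((V ⊗ₖ V) * swapT) := by
    simp only [M, A, hR, V, mul_kronecker_mul, inv_kronecker]
  have hV : V ∈ unitaryGroup (Fin 2) ℂ :=
    mul_mul_nonsing_inv_mem_unitaryGroup hdet (by rwa [conjTranspose_mul_self_fin_two])
  have hk' : k ∈ unitary ℂ := by
    rw [Unitary.mem_iff_star_mul_self, Complex.star_def, conj_mul', hk]
    norm_num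
  refine ⟨?_, hM ▸ braidedYB_smul k (braidedYB_kronecker_self_mul_swapT V)⟩
  rw [hM]
  exact mem_unitaryGroup_iff'.mp
    (Unitary.smul_mem_of_mem hk' (mul_mem (kronecker_mem_unitary hV hV) swapT_mem_unitaryGroup))

theorem family2_unitary_solution (k a b c d : ℂ)
    (hk : ‖k‖ = 1)
    (hdet : IsUnit (!![a, b; c, d] : Matrix (Fin 2) (Fin 2) ℂ).det)
    (hc1 : a * (starRingEnd ℂ) b + c * (starRingEnd ℂ) d ≠ 0)
    (hc2 : (starRingEnd ℂ) a * b + (starRingEnd ℂ) c * d ≠ 0)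
    (p q : ℂ)
    (hp : p = ((b * (starRingEnd ℂ) b + d * (starRingEnd ℂ) d) *
        ((starRingEnd ℂ) a * b + (starRingEnd ℂ) c * d)) /
        ((a * (starRingEnd ℂ) a + c * (starRingEnd ℂ) c) *
        (a * (starRingEnd ℂ) b + c * (starRingEnd ℂ) d)))
    (hq : q = ((a * (starRingEnd ℂ) a + c * (starRingEnd ℂ) c) *
        (a * (starRingEnd ℂ) b + c * (starRingEnd ℂ) d)) /
        ((b * (starRingEnd ℂ) b + d * (starRingEnd ℂ) d) *
        ((starRingEnd ℂ) a * b + (starRingEnd ℂ) c * d))) :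
    let Q : Matrix (Fin 2) (Fin 2) ℂ := !![a, b; c, d]
    let A := Q ⊗ₖ Q
    let R := m44 !![0, 0, 0, p; 0, 0, 1, 0; 0, 1, 0, 0; q, 0, 0, 0]
    let M := k • (A * R * A⁻¹ * swapT)
    Mᴴ * M = 1 ∧ braidedYB M :=
  family2_unitary_solution_general k a b c d hk hdet hc2 p q hp hq
end

section
/- (Case R31, converse direction) Let p, q, r ∈ ℂ, let R = diag(1, p, q, r), and let Q = [[a,b],[c,d]] be an invertible 2×2 complex matrix such that (Q ⊗ₖ Q)·R·(Q ⊗ₖ Q)⁻¹ is unitary. Then |p| = |q| = |r| = 1, and if R is not the identity matrix then a·conj(b) + c·conj(d) = 0. -/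
open Matrix Kronecker

/-!
If `K R K⁻¹` is unitary then `R` preserves the positive definite form `G = Kᴴ K`, i.e.
`Rᴴ G R = G`. For `R = diagonal f` this reads `conj (f x) * G x y * f y = G x y`: the diagonal
entries of `G` are positive, so `|f x| = 1`, and `G x y = 0` whenever `f x ≠ f y`.
For `K = Q ⊗ₖ Q` we have `G = g ⊗ₖ g` with `g = Qᴴ Q`. If `R ≠ 1`, some eigenvalue `f (i, j)`
differs from `f (0, 0) = 1`, so `g 0 i * g 0 j = 0` with `(i, j) ≠ (0, 0)`; since `g 0 0 > 0`
this forces `g 0 1 = 0`, and `a * conj b + c * conj d` is its conjugate.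
-/

theorem Complex.star_mul_self_eq_one_iff (z : ℂ) : star z * z = 1 ↔ ‖z‖ = 1 := by
  rw [Complex.star_def, Complex.conj_mul']
  norm_cast
  exact pow_eq_one_iff_of_nonneg (norm_nonneg z) two_ne_zero

namespace Matrix

theorem conjTranspose_kronecker_mul_self {α l m n p : Type*} [CommRing α] [StarRing α]
    [Fintype l] [Fintype n] (A : Matrix l m α) (B : Matrix n p α) :
    (A ⊗ₖ B)ᴴ * (A ⊗ₖ B) = (Aᴴ * A) ⊗ₖ (Bᴴ * B) := by
  rw [conjTranspose_kronecker, mul_kronecker_mul]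

variable {n α : Type*} [Fintype n] [DecidableEq n]

theorem conjTranspose_mul_gram_mul_of_unitary_conj [CommRing α] [StarRing α] {K D : Matrix n n α}
    (hK : IsUnit K.det) (hU : (K * D * K⁻¹)ᴴ * (K * D * K⁻¹) = 1) :
    Dᴴ * (Kᴴ * K) * D = Kᴴ * K := by
  set U := K * D * K⁻¹
  have hKD : K * D = U * K := by simp [U, Matrix.mul_assoc, nonsing_inv_mul _ hK]
  calc Dᴴ * (Kᴴ * K) * D = (K * D)ᴴ * (K * D) := by simp [Matrix.mul_assoc]
    _ = Kᴴ * (Uᴴ * U) * K := by simp [hKD, Matrix.mul_assoc]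
    _ = Kᴴ * K := by rw [hU, Matrix.mul_one]

theorem star_mul_gram_mul_of_unitary_conj_diagonal [CommRing α] [StarRing α] {K : Matrix n n α}
    {f : n → α} (hK : IsUnit K.det)
    (hU : (K * diagonal f * K⁻¹)ᴴ * (K * diagonal f * K⁻¹) = 1) (x y : n) :
    star (f x) * (Kᴴ * K) x y * f y = (Kᴴ * K) x y := by
  simpa [diagonal_conjTranspose, diagonal_mul, mul_diagonal] using
    congrFun₂ (conjTranspose_mul_gram_mul_of_unitary_conj hK hU) x y

open ComplexOrder in
theorem gram_apply_self_ne_zero {K : Matrix n n ℂ} (hK : IsUnit K.det) (x : n) :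
    (Kᴴ * K) x x ≠ 0 :=
  (PosDef.conjTranspose_mul_self K (mulVec_injective_of_det_ne_zero hK.ne_zero)).diag_pos.ne'

variable {K : Matrix n n ℂ} {f : n → ℂ}

theorem norm_eq_one_of_unitary_conj_diagonal (hK : IsUnit K.det)
    (hU : (K * diagonal f * K⁻¹)ᴴ * (K * diagonal f * K⁻¹) = 1) (x : n) : ‖f x‖ = 1 := by
  have h := star_mul_gram_mul_of_unitary_conj_diagonal hK hU x x
  have : star (f x) * f x = 1 := by
    apply mul_right_cancel₀ (gram_apply_self_ne_zero hK x)
    linear_combination h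
  exact (Complex.star_mul_self_eq_one_iff _).mp this

theorem gram_apply_eq_zero_of_unitary_conj_diagonal (hK : IsUnit K.det)
    (hU : (K * diagonal f * K⁻¹)ᴴ * (K * diagonal f * K⁻¹) = 1) {x y : n} (hxy : f x ≠ f y) :
    (Kᴴ * K) x y = 0 := by
  have h := star_mul_gram_mul_of_unitary_conj_diagonal hK hU x y
  by_contra hG
  have hxy' : star (f x) * f y = 1 := mul_right_cancel₀ hG (by linear_combination h)
  have hxx : star (f x) * f x = 1 :=
    (Complex.star_mul_self_eq_one_iff _).mpr (norm_eq_one_of_unitary_conj_diagonal hK hU x)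
  exact hxy (mul_left_cancel₀ (left_ne_zero_of_mul_eq_one hxx) (hxx.trans hxy'.symm))

end Matrix

theorem m44_diagonal_s14 (p q r : ℂ) : m44 !![1, 0, 0, 0; 0, p, 0, 0; 0, 0, q, 0; 0, 0, 0, r] =
    diagonal (fun x => ![1, p, q, r] (toFin4 x)) := by
  ext ⟨i, j⟩ ⟨k, l⟩
  fin_cases i <;> fin_cases j <;> fin_cases k <;> fin_cases l <;> rfl

theorem caseR31_converse (p q r a b c d : ℂ)
    (hdet : IsUnit (!![a, b; c, d] : Matrix (Fin 2) (Fin 2) ℂ).det)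
    (R : Matrix (Fin 2 × Fin 2) (Fin 2 × Fin 2) ℂ)
    (hR : R = m44 !![1, 0, 0, 0; 0, p, 0, 0; 0, 0, q, 0; 0, 0, 0, r])
    (hU : ((!![a, b; c, d] ⊗ₖ !![a, b; c, d]) * R * (!![a, b; c, d] ⊗ₖ !![a, b; c, d])⁻¹)ᴴ *
      ((!![a, b; c, d] ⊗ₖ !![a, b; c, d]) * R * (!![a, b; c, d] ⊗ₖ !![a, b; c, d])⁻¹) = 1) :
    (‖p‖ = 1 ∧ ‖q‖ = 1 ∧ ‖r‖ = 1) ∧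
      (R ≠ 1 → a * (starRingEnd ℂ) b + c * (starRingEnd ℂ) d = 0) := by
  set Q : Matrix (Fin 2) (Fin 2) ℂ := !![a, b; c, d]
  set f : Fin 2 × Fin 2 → ℂ := fun x => ![1, p, q, r] (toFin4 x)
  have hK : IsUnit (Q ⊗ₖ Q).det := by
    rw [det_kronecker]
    exact (hdet.pow _).mul (hdet.pow _)
  rw [m44_diagonal_s14] at hR
  subst hR
  have hnorm := norm_eq_one_of_unitary_conj_diagonal hK hU
  refine ⟨⟨hnorm (0, 1), hnorm (1, 0), hnorm (1, 1)⟩, fun hR1 => ?_⟩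
  obtain ⟨y, hy⟩ : ∃ y, f (0, 0) ≠ f y := by
    by_contra! h
    exact hR1 (by rw [← diagonal_one]; exact congrArg diagonal (funext fun y => (h y).symm))
  have hG := gram_apply_eq_zero_of_unitary_conj_diagonal hK hU hy
  rw [conjTranspose_kronecker_mul_self, kroneckerMap_apply] at hG
  have hoff : ∀ k : Fin 2, (Qᴴ * Q) 0 k = 0 → (Qᴴ * Q) 0 1 = 0 := by
    intro k hk
    fin_cases k
    exacts [absurd hk (gram_apply_self_ne_zero hdet 0), hk]
  have h01 : (Qᴴ * Q) 0 1 = 0 := by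
    rcases mul_eq_zero.mp hG with h | h
    exacts [hoff _ h, hoff _ h]
  simpa [Q, mul_apply, Fin.sum_univ_two, mul_comm] using congrArg star h01
end

section
/- (Case R23) Let p, q, s ∈ ℂ and let R23 be the 4×4 complex matrix with rows [1,p,q,s], [0,1,0,q], [0,0,1,p], [0,0,0,1]. If Q is an invertible 2×2 complex matrix such that (Q ⊗ₖ Q)·R23·(Q ⊗ₖ Q)⁻¹ is unitary, then p = 0, q = 0 and s = 0 (so R23 is the identity matrix). -/
open Matrix Kronecker

lemma trace_ctm_eq_zero {n : Type*} [Fintype n] [DecidableEq n]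
    (B : Matrix n n ℂ) (h : Matrix.trace (Bᴴ * B) = 0) : B = 0 := by
  have key : (∑ j, ∑ i, (Complex.normSq (B i j) : ℝ)) = 0 := by
    have : Matrix.trace (Bᴴ * B) = ↑(∑ j, ∑ i, (Complex.normSq (B i j) : ℝ)) := by
      simp [Matrix.trace, Matrix.mul_apply, Matrix.diag, Matrix.conjTranspose_apply,
        Complex.normSq_eq_conj_mul_self]
    rw [this] at h
    exact_mod_cast h
  ext i j
  have h1 : ∀ j ∈ Finset.univ, (0:ℝ) ≤ ∑ i, (Complex.normSq (B i j) : ℝ) := by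
    intro j _
    exact Finset.sum_nonneg fun i _ => Complex.normSq_nonneg _
  have h2 := (Finset.sum_eq_zero_iff_of_nonneg h1).mp key j (Finset.mem_univ j)
  have h3 := (Finset.sum_eq_zero_iff_of_nonneg
    (fun i _ => Complex.normSq_nonneg (B i j))).mp h2 i (Finset.mem_univ i)
  simpa using Complex.normSq_eq_zero.mp h3

theorem caseR23_trivial (p q s : ℂ) (Q : Matrix (Fin 2) (Fin 2) ℂ) (hQ : IsUnit Q.det)
    (hU : (((Q ⊗ₖ Q) * m44 !![1, p, q, s; 0, 1, 0, q; 0, 0, 1, p; 0, 0, 0, 1] * (Q ⊗ₖ Q)⁻¹)ᴴ *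
      ((Q ⊗ₖ Q) * m44 !![1, p, q, s; 0, 1, 0, q; 0, 0, 1, p; 0, 0, 0, 1] * (Q ⊗ₖ Q)⁻¹) = 1)) :
    p = 0 ∧ q = 0 ∧ s = 0 := by
  set R := m44 !![1, p, q, s; 0, 1, 0, q; 0, 0, 1, p; 0, 0, 0, 1] with hR
  set A := Q ⊗ₖ Q with hA
  have hAdet : IsUnit A.det := by
    rw [hA, Matrix.det_kronecker]
    simpa using (hQ.pow 2).mul (hQ.pow 2)
  have hAinv : A⁻¹ * A = 1 := Matrix.nonsing_inv_mul A hAdet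
  have hAinv' : A * A⁻¹ = 1 := Matrix.mul_nonsing_inv A hAdet
  set U := A * R * A⁻¹ with hUdef
  -- trace of R is 4
  have htrR : Matrix.trace R = 4 := by
    simp [hR, Matrix.trace, m44, toFin4, Matrix.diag, Fintype.sum_prod_type, Fin.sum_univ_succ]
    norm_num
  have htrU : Matrix.trace U = 4 := by
    rw [hUdef, Matrix.trace_mul_cycle, hAinv, Matrix.one_mul, htrR]
  have htrUH : Matrix.trace Uᴴ = 4 := by
    rw [Matrix.trace_conjTranspose, htrU]
    simp
  have htrUHU : Matrix.trace (Uᴴ * U) = 4 := by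
    rw [hU]
    simp [Matrix.trace_one]
  -- trace ((U-1)ᴴ(U-1)) = 0
  have hz : Matrix.trace ((U - 1)ᴴ * (U - 1)) = 0 := by
    have : (U - 1)ᴴ * (U - 1) = Uᴴ * U - Uᴴ - U + 1 := by
      simp [Matrix.conjTranspose_sub, Matrix.sub_mul, Matrix.mul_sub]
      noncomm_ring
    rw [this]
    simp [Matrix.trace_add, Matrix.trace_sub, htrUHU, htrUH, htrU, Matrix.trace_one]
  have hU1 : U = 1 := by
    have := trace_ctm_eq_zero (U - 1) hz
    linear_combination (norm := abel) this
  have hR1 : R = 1 := by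
    have : A * R * A⁻¹ = 1 := hU1
    calc R = A⁻¹ * (A * R * A⁻¹) * A := by
            rw [Matrix.mul_assoc, Matrix.mul_assoc, hAinv, Matrix.mul_one,
              ← Matrix.mul_assoc, hAinv, Matrix.one_mul]
      _ = 1 := by rw [this, Matrix.mul_one, hAinv]
  refine ⟨?_, ?_, ?_⟩
  · have := congrFun (congrFun hR1 (0, 0)) (0, 1)
    simpa [hR, m44, toFin4, Matrix.one_apply] using this
  · have := congrFun (congrFun hR1 (0, 0)) (1, 0)
    simpa [hR, m44, toFin4, Matrix.one_apply] using this
  · have := congrFun (congrFun hR1 (0, 0)) (1, 1)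
    simpa [hR, m44, toFin4, Matrix.one_apply] using this
end

section
/- (Case R21) Let p, q ∈ ℂ and let R21 be the 4×4 complex matrix with rows [1,0,0,0], [0,p,1-p·q,0], [0,0,q,0], [0,0,0,1]. If Q is an invertible 2×2 complex matrix such that (Q ⊗ₖ Q)·R21·(Q ⊗ₖ Q)⁻¹ is unitary, then p·q = 1 (so R21 is the diagonal matrix diag(1,p,q,1)). -/
open Matrix Kronecker

theorem aux (p q : ℂ) (G : Matrix (Fin 2) (Fin 2) ℂ)
    (hherm : G 1 0 = (starRingEnd ℂ) (G 0 1))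
    (ha : G 0 0 ≠ 0) (hd : G 1 1 ≠ 0)
    (hdet : G 0 0 * G 1 1 - G 0 1 * G 1 0 ≠ 0)
    (hK : (m44 !![1, 0, 0, 0; 0, p, 1 - p * q, 0; 0, 0, q, 0; 0, 0, 0, 1])ᴴ *
      (G ⊗ₖ G) * (m44 !![1, 0, 0, 0; 0, p, 1 - p * q, 0; 0, 0, q, 0; 0, 0, 0, 1])
      = G ⊗ₖ G) : p * q = 1 := by
  have e1 := congrFun (congrFun hK ((0:Fin 2),(1:Fin 2))) ((0:Fin 2),(1:Fin 2))
  have e2 := congrFun (congrFun hK ((0:Fin 2),(1:Fin 2))) ((1:Fin 2),(1:Fin 2))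
  have e3 := congrFun (congrFun hK ((0:Fin 2),(1:Fin 2))) ((1:Fin 2),(0:Fin 2))
  simp only [Matrix.mul_apply, Fintype.sum_prod_type, Fin.sum_univ_two,
    Matrix.conjTranspose_apply, kroneckerMap_apply] at e1 e2 e3
  simp [m44, toFin4, Matrix.vecHead, Matrix.vecTail, hherm] at e1 e2 e3
  have had : G 0 0 * G 1 1 ≠ 0 := mul_ne_zero ha hd
  have hpp : (starRingEnd ℂ) p * p = 1 :=
    mul_right_cancel₀ had (by linear_combination e1)
  by_cases hb : G 0 1 = 0
  · rw [hb] at e3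
    simp at e3
    have hp' : p ≠ 0 := right_ne_zero_of_mul_eq_one hpp
    have h0 : 1 - p * q = 0 := by
      rcases e3 with (h | h | h) | h
      · exact absurd h hp'
      · exact absurd h ha
      · exact absurd h hd
      · exact h
    linear_combination -h0
  · have hbd : G 0 1 * G 1 1 ≠ 0 := mul_ne_zero hb hd
    have hp1 : (starRingEnd ℂ) p = 1 :=
      mul_right_cancel₀ hbd (by linear_combination e2)
    have hp : p = 1 := by
      have := hpp; rw [hp1, one_mul] at this; exact this
    rw [hp1, hp] at e3
    have h : (G 0 0 * G 1 1 - G 0 1 * G 1 0) * (1 - q) = 0 := by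
      rw [hherm]; linear_combination e3
    have hq : 1 - q = 0 := (mul_eq_zero.mp h).resolve_left hdet
    rw [hp]
    linear_combination -hq

theorem caseR21_diagonal (p q : ℂ) (Q : Matrix (Fin 2) (Fin 2) ℂ) (hQ : IsUnit Q.det)
    (hU : (((Q ⊗ₖ Q) * m44 !![1, 0, 0, 0; 0, p, 1 - p * q, 0; 0, 0, q, 0; 0, 0, 0, 1] *
        (Q ⊗ₖ Q)⁻¹)ᴴ *
      ((Q ⊗ₖ Q) * m44 !![1, 0, 0, 0; 0, p, 1 - p * q, 0; 0, 0, q, 0; 0, 0, 0, 1] *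
        (Q ⊗ₖ Q)⁻¹) = 1)) :
    p * q = 1 := by
  set R := m44 !![1, 0, 0, 0; 0, p, 1 - p * q, 0; 0, 0, q, 0; 0, 0, 0, 1] with hRdef
  set A := Q ⊗ₖ Q with hAdef
  have hAdet : IsUnit A.det := by
    rw [hAdef, Matrix.det_kronecker]
    exact (hQ.pow _).mul (hQ.pow _)
  have hAinv : A⁻¹ * A = 1 := nonsing_inv_mul A hAdet
  have hXA : (A * R * A⁻¹) * A = A * R := by
    rw [Matrix.mul_assoc (A * R) A⁻¹ A, hAinv, Matrix.mul_one]
  have hK' : Rᴴ * (Aᴴ * A) * R = Aᴴ * A := by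
    have h := congrArg (fun M => Aᴴ * M * A) hU
    simp only [Matrix.mul_one] at h
    calc Rᴴ * (Aᴴ * A) * R = ((A * R)ᴴ) * (A * R) := by
          simp only [conjTranspose_mul, Matrix.mul_assoc]
      _ = (((A * R * A⁻¹) * A)ᴴ) * ((A * R * A⁻¹) * A) := by rw [hXA]
      _ = Aᴴ * ((A * R * A⁻¹)ᴴ * (A * R * A⁻¹)) * A := by
          simp only [conjTranspose_mul, Matrix.mul_assoc]
      _ = Aᴴ * A := h
  have hG : Aᴴ * A = (Qᴴ * Q) ⊗ₖ (Qᴴ * Q) := by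
    have hct : Aᴴ = Qᴴ ⊗ₖ Qᴴ := by
      ext ⟨i, j⟩ ⟨k, l⟩
      simp [hAdef, Matrix.conjTranspose_apply, kroneckerMap_apply]
    rw [hct, hAdef, Matrix.mul_kronecker_mul]
  rw [hG] at hK'
  set G := Qᴴ * Q with hGdef
  have hQdet : Q.det ≠ 0 := hQ.ne_zero
  have hherm : G 1 0 = (starRingEnd ℂ) (G 0 1) := by
    simp [hGdef, Matrix.mul_apply, Fin.sum_univ_two, Matrix.conjTranspose_apply]
    ring
  have ha : G 0 0 ≠ 0 := by
    intro h
    have h1 : (starRingEnd ℂ) (Q 0 0) * Q 0 0 + (starRingEnd ℂ) (Q 1 0) * Q 1 0 = 0 := by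
      simpa [hGdef, Matrix.mul_apply, Fin.sum_univ_two, Matrix.conjTranspose_apply] using h
    rw [← Complex.normSq_eq_conj_mul_self, ← Complex.normSq_eq_conj_mul_self,
      ← Complex.ofReal_add] at h1
    have h2 : Complex.normSq (Q 0 0) + Complex.normSq (Q 1 0) = 0 := by exact_mod_cast h1
    have h3 : Q 0 0 = 0 := Complex.normSq_eq_zero.mp (show Complex.normSq (Q 0 0) = 0 by nlinarith [Complex.normSq_nonneg (Q 0 0), Complex.normSq_nonneg (Q 1 0)])
    have h4 : Q 1 0 = 0 := Complex.normSq_eq_zero.mp (show Complex.normSq (Q 1 0) = 0 by nlinarith [Complex.normSq_nonneg (Q 0 0), Complex.normSq_nonneg (Q 1 0)])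
    exact hQdet (by rw [Matrix.det_fin_two, h3, h4]; ring)
  have hd : G 1 1 ≠ 0 := by
    intro h
    have h1 : (starRingEnd ℂ) (Q 0 1) * Q 0 1 + (starRingEnd ℂ) (Q 1 1) * Q 1 1 = 0 := by
      simpa [hGdef, Matrix.mul_apply, Fin.sum_univ_two, Matrix.conjTranspose_apply] using h
    rw [← Complex.normSq_eq_conj_mul_self, ← Complex.normSq_eq_conj_mul_self,
      ← Complex.ofReal_add] at h1
    have h2 : Complex.normSq (Q 0 1) + Complex.normSq (Q 1 1) = 0 := by exact_mod_cast h1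
    have h3 : Q 0 1 = 0 := Complex.normSq_eq_zero.mp (show Complex.normSq (Q 0 1) = 0 by nlinarith [Complex.normSq_nonneg (Q 0 1), Complex.normSq_nonneg (Q 1 1)])
    have h4 : Q 1 1 = 0 := Complex.normSq_eq_zero.mp (show Complex.normSq (Q 1 1) = 0 by nlinarith [Complex.normSq_nonneg (Q 0 1), Complex.normSq_nonneg (Q 1 1)])
    exact hQdet (by rw [Matrix.det_fin_two, h3, h4]; ring)
  have hdet : G 0 0 * G 1 1 - G 0 1 * G 1 0 ≠ 0 := by
    have : G.det = (starRingEnd ℂ) Q.det * Q.det := by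
      rw [hGdef, Matrix.det_mul, Matrix.det_conjTranspose]; rfl
    have hne : G.det ≠ 0 := by
      rw [this]
      exact mul_ne_zero (by simpa using hQdet) hQdet
    rwa [Matrix.det_fin_two] at hne
  exact aux p q G hherm ha hd hdet hK'
end

section
/- Let N be an n×n complex matrix whose entrywise complex conjugate conj(N) satisfies N·conj(N) = I (the identity matrix). Then Σ_{i,j} |N_{ij}|² − n = Σ_{i<j} |N_{ij} − N_{ji}|²; in particular Σ_{i,j} |N_{ij}|² ≥ n, with equality if and only if N is symmetric. -/
/-!
Write `M = conj N`. Expanding `‖a - b‖² = ‖a‖² + ‖b‖² - 2 Re (a conj b)` entrywise gives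
`Σ_{i,j} |N_ij - N_ji|² = 2 Σ_{i,j} |N_ij|² - 2 Re tr (N M)`, and `tr (N M) = tr 1 = n`.
The summand on the left is symmetric in `(i, j)` and vanishes on the diagonal, so the left side
is twice the sum over `i < j`. Everything then follows since that sum is nonnegative and vanishes
exactly when `N` is symmetric.
-/

open Matrix Finset

section
variable {ι : Type*} [Fintype ι]

lemma sum_sum_eq_two_nsmul_sum_sum_ite_lt [LinearOrder ι] {M : Type*} [AddCommMonoid M]
    (f : ι → ι → M) (hf : ∀ i j, f i j = f j i) (hdiag : ∀ i, f i i = 0) :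
    ∑ i, ∑ j, f i j = 2 • ∑ i, ∑ j, if i < j then f i j else 0 := by
  have hsplit : ∀ i j, f i j = (if i < j then f i j else 0) + (if j < i then f j i else 0) := by
    intro i j
    rcases lt_trichotomy i j with hij | rfl | hij
    · simp [hij, hij.not_gt]
    · simp [hdiag]
    · simp [hij, hij.not_gt, hf i j]
  calc ∑ i, ∑ j, f i j
      = ∑ i, ∑ j, ((if i < j then f i j else 0) + (if j < i then f j i else 0)) :=
        sum_congr rfl fun i _ => sum_congr rfl fun j _ => hsplit i j
    _ = 2 • ∑ i, ∑ j, if i < j then f i j else 0 := by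
        rw [two_nsmul]
        simp only [sum_add_distrib]
        rw [sum_comm (f := fun i j => if j < i then f j i else 0)]

lemma sum_sum_norm_sub_transpose_sq {𝕜 : Type*} [RCLike 𝕜] (A : Matrix ι ι 𝕜) :
    ∑ i, ∑ j, ‖A i j - A j i‖ ^ 2 =
      2 * ∑ i, ∑ j, ‖A i j‖ ^ 2 - 2 * RCLike.re (trace (A * A.map (starRingEnd 𝕜))) := by
  have hexpand : ∀ i j, ‖A i j - A j i‖ ^ 2 =
      ‖A i j‖ ^ 2 + ‖A j i‖ ^ 2 - 2 * RCLike.re (A i j * starRingEnd 𝕜 (A j i)) := by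
    intro i j
    simp only [← RCLike.normSq_eq_def', RCLike.normSq_sub]
  simp only [hexpand, sum_add_distrib, sum_sub_distrib, ← mul_sum, trace, diag_apply, mul_apply,
    map_apply, map_sum]
  rw [sum_comm (f := fun i j => ‖A j i‖ ^ 2)]
  ring

lemma sum_sum_norm_sub_transpose_sq_eq_zero_iff {E : Type*} [NormedAddCommGroup E]
    (A : Matrix ι ι E) : ∑ i, ∑ j, ‖A i j - A j i‖ ^ 2 = 0 ↔ A.IsSymm := by
  have hnonneg : ∀ i j, 0 ≤ ‖A i j - A j i‖ ^ 2 := fun _ _ => by positivity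
  simp only [sum_eq_zero_iff_of_nonneg fun i _ => sum_nonneg fun j _ => hnonneg i j,
    sum_eq_zero_iff_of_nonneg fun j _ => hnonneg _ j, mem_univ, true_implies,
    pow_eq_zero_iff two_ne_zero, norm_eq_zero, sub_eq_zero]
  exact ⟨fun hA => IsSymm.ext fun i j => hA j i, fun hA i j => hA.apply j i⟩

end

theorem sum_abs_sq_of_conj_inv {n : ℕ} (N : Matrix (Fin n) (Fin n) ℂ)
    (h : N * N.map (starRingEnd ℂ) = 1) :
    ((∑ i, ∑ j, ‖N i j‖ ^ 2) - (n : ℝ) =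
      ∑ i, ∑ j, if i < j then ‖N i j - N j i‖ ^ 2 else 0) ∧
    ((n : ℝ) ≤ ∑ i, ∑ j, ‖N i j‖ ^ 2) ∧
    ((∑ i, ∑ j, ‖N i j‖ ^ 2) = (n : ℝ) ↔ N.IsSymm) := by
  have htrace : RCLike.re (trace (N * N.map (starRingEnd ℂ))) = n := by simp [h]
  have hT_eq := sum_sum_norm_sub_transpose_sq N
  have hT_pairs := sum_sum_eq_two_nsmul_sum_sum_ite_lt (fun i j => ‖N i j - N j i‖ ^ 2)
    (fun i j => by rw [norm_sub_rev]) (fun i => by simp)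
  have hT_nonneg : 0 ≤ ∑ i, ∑ j, ‖N i j - N j i‖ ^ 2 := by positivity
  rw [htrace] at hT_eq
  rw [nsmul_eq_mul, Nat.cast_ofNat] at hT_pairs
  refine ⟨by linarith, by linarith, ?_⟩
  rw [← sum_sum_norm_sub_transpose_sq_eq_zero_iff]
  constructor <;> intro <;> linarith
end

section
/- Let N be a 2×2 complex matrix, invertible with conj(N) = N⁻¹ (entrywise complex conjugate equals the inverse), and set δ = Σ_{i,j} |N_{ij}|². Then δ = 2 + |N₀₁ − N₁₀|². Moreover, if α ∈ ℂ with |α| = 1 satisfies (δ : ℂ) = −(α² + α⁻²), then α² = −1 and N₀₁ = N₁₀. -/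
/-!
Write `N = !![a, b; c, d]`. The diagonal entries of `N * conj N = 1` read
`|a|² + b c̄ = 1` and `c b̄ + |d|² = 1`; adding them gives `δ = 2 + |b - c|²`.
For `|α| = 1` the number `-(α² + α⁻²) = -2 Re α²` is at most `2`, so it can equal `δ ≥ 2`
only when `b = c` and `Re α² = -1`, which on the unit circle forces `α² = -1`.
-/

open Matrix

namespace RCLike

variable {𝕜 : Type*} [RCLike 𝕜]

theorem neg_add_inv_eq_of_norm_eq_one {u : 𝕜} (hu : ‖u‖ = 1) :
    -(u + u⁻¹) = ((-(2 * re u) : ℝ) : 𝕜) := by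
  rw [inv_eq_conj hu, add_conj]
  push_cast
  ring

theorem eq_neg_one_of_norm_eq_one_of_re_le_neg_one {u : 𝕜} (hu : ‖u‖ = 1)
    (hre : re u ≤ -1) : u = -1 := by
  have : ‖-u‖ ≤ re (-u) := by rw [norm_neg, hu, map_neg]; linarith
  rw [norm_le_re_iff_eq_norm, norm_neg, hu, ofReal_one] at this
  exact neg_eq_iff_eq_neg.mp this

end RCLike

theorem Matrix.sum_norm_sq_eq_two_add_norm_sq_sub_of_mul_map_conj_eq_one {𝕜 : Type*}
    [RCLike 𝕜] {N : Matrix (Fin 2) (Fin 2) 𝕜} (hN : N * N.map (starRingEnd 𝕜) = 1) :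
    ∑ i, ∑ j, ‖N i j‖ ^ 2 = 2 + ‖N 0 1 - N 1 0‖ ^ 2 := by
  have diag (i : Fin 2) :
      N i 0 * starRingEnd 𝕜 (N 0 i) + N i 1 * starRingEnd 𝕜 (N 1 i) = 1 := by
    simpa [mul_apply, Fin.sum_univ_two] using congrFun (congrFun hN i) i
  apply RCLike.ofReal_injective (K := 𝕜)
  push_cast
  simp only [Fin.sum_univ_two, ← RCLike.mul_conj, map_sub]
  linear_combination diag 0 + diag 1

theorem bracket_two_by_two (N : Matrix (Fin 2) (Fin 2) ℂ)
    (hinv : IsUnit N.det)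
    (hconj : N.map (starRingEnd ℂ) = N⁻¹) :
    (∑ i, ∑ j, ‖N i j‖ ^ 2) = 2 + ‖N 0 1 - N 1 0‖ ^ 2 ∧
    ∀ α : ℂ, ‖α‖ = 1 →
      ((∑ i, ∑ j, ‖N i j‖ ^ 2 : ℝ) : ℂ) = -(α ^ 2 + α⁻¹ ^ 2) →
      α ^ 2 = -1 ∧ N 0 1 = N 1 0 := by
  have hδ := sum_norm_sq_eq_two_add_norm_sq_sub_of_mul_map_conj_eq_one
    (hconj ▸ mul_nonsing_inv N hinv)
  refine ⟨hδ, fun α hα h => ?_⟩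
  have hu : ‖α ^ 2‖ = 1 := by rw [norm_pow, hα, one_pow]
  rw [inv_pow, RCLike.neg_add_inv_eq_of_norm_eq_one hu, hδ] at h
  have hre : 2 + ‖N 0 1 - N 1 0‖ ^ 2 = -(2 * RCLike.re (α ^ 2)) := RCLike.ofReal_injective h
  have hre_ge : -1 ≤ RCLike.re (α ^ 2) :=
    hu ▸ neg_le_of_abs_le (RCLike.abs_re_le_norm (α ^ 2))
  have hsub : ‖N 0 1 - N 1 0‖ ^ 2 = 0 := by linarith [sq_nonneg ‖N 0 1 - N 1 0‖]
  refine ⟨RCLike.eq_neg_one_of_norm_eq_one_of_re_le_neg_one hu (by linarith), ?_⟩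
  simpa [sub_eq_zero] using hsub
end
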